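/- Let v: ℝ → ℝ be a smooth function, x₀ ∈ ℝ a point with v(x₀) > 0 and v′(x₀) ≠ 0, N ∈ ℕ, and B₀, …, B_N real numbers. If there exists δ > 0 such that ∑_{s=0}^{N} B_s · K^s(x₀, λ) = 0 for every λ ∈ (v(x₀)² − δ, v(x₀)²), then B₀ = B₁ = ⋯ = B_N = 0. (This is the one-dimensional instance of the uniqueness lemma for the loop equation of a semisimple generalized Frobenius manifold.) -/

import Mathlib

/-- The coefficient functions `K^s(x, λ)` of the loop equation of the one-dimensional
generalized Frobenius manifold with potential `F = v⁴/12`. -/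
noncomputable def Kcoef (v : ℝ → ℝ) (s : ℕ) (x lam : ℝ) : ℝ :=
  iteratedDeriv s (fun y => 1 / (2 * v y * ((v y) ^ 2 - lam))) x
    + (s : ℝ) * iteratedDeriv s
        (fun y => (1 / (2 * lam)) * (((v y) ^ 2 - lam) ^ (-(1 / 2 : ℝ)) - 1 / v y)) x
    + ∑ k ∈ Finset.Icc 1 s,
        (Nat.choose s k : ℝ)
          * iteratedDeriv (k - 1)
              (fun y => (1 / (2 * lam)) * (v y * ((v y) ^ 2 - lam) ^ (-(1 / 2 : ℝ)) - 1)) x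
          * iteratedDeriv (s + 1 - k)
              (fun y => ((v y) ^ 2 - lam) ^ (-(1 / 2 : ℝ))) x

open Topology Filter Set

section Aux

lemma one_le_infty : (1 : WithTop ℕ∞) ≤ ((⊤ : ℕ∞) : WithTop ℕ∞) := by norm_num

lemma infty_succ_le : ((⊤ : ℕ∞) : WithTop ℕ∞) + 1 ≤ ((⊤ : ℕ∞) : WithTop ℕ∞) := by norm_num

/-- Coefficient functions in the expansion of `d^s/dy^s (f(y) * ((v y)^2 - lam)^α)`. -/
noncomputable def Faux (v f : ℝ → ℝ) (α : ℝ) : ℕ → ℕ → ℝ → ℝ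
  | 0, 0 => f
  | 0, _ + 1 => fun _ => 0
  | s + 1, 0 => deriv (Faux v f α s 0)
  | s + 1, j + 1 => fun y =>
      deriv (Faux v f α s (j + 1)) y + (α - j) * (2 * v y * deriv v y) * Faux v f α s j y

lemma Faux_gt {v f : ℝ → ℝ} {α : ℝ} : ∀ {s j : ℕ}, s < j → Faux v f α s j = fun _ => 0 := by
  intro s
  induction s with
  | zero => intro j hj; match j, hj with
    | j + 1, _ => rfl
  | succ s ih =>
    intro j hj
    match j, hj with
    | j + 1, hj =>
      show (fun y => deriv (Faux v f α s (j+1)) y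
          + (α - j) * (2 * v y * deriv v y) * Faux v f α s j y) = fun _ => 0
      rw [ih (by omega), ih (by omega)]
      funext y
      simp [deriv_const]

lemma Faux_contDiffOn {v f : ℝ → ℝ} (hv : ContDiff ℝ (⊤ : ℕ∞) v) {U : Set ℝ}
    (hU : IsOpen U) (hf : ContDiffOn ℝ (⊤ : ℕ∞) f U) (α : ℝ) :
    ∀ s j, ContDiffOn ℝ (⊤ : ℕ∞) (Faux v f α s j) U := by
  have hv' : ContDiff ℝ (⊤ : ℕ∞) (deriv v) := (contDiff_infty_iff_deriv.mp hv).2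
  intro s
  induction s with
  | zero =>
    intro j
    match j with
    | 0 => exact hf
    | j + 1 => exact contDiffOn_const
  | succ s ih =>
    intro j
    match j with
    | 0 => exact (ih 0).deriv_of_isOpen hU infty_succ_le
    | j + 1 =>
      exact ((ih (j+1)).deriv_of_isOpen hU infty_succ_le).add
        ((contDiffOn_const.mul
          ((contDiffOn_const.mul (hv.contDiffOn)).mul hv'.contDiffOn)).mul (ih j))

lemma Faux_diag (v f : ℝ → ℝ) (α : ℝ) :
    ∀ (s : ℕ) (x : ℝ), Faux v f α s s x
      = f x * (∏ i ∈ Finset.range s, (α - i)) * (2 * v x * deriv v x) ^ s := by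
  intro s
  induction s with
  | zero => intro x; simp [Faux]
  | succ s ih =>
    intro x
    show deriv (Faux v f α s (s + 1)) x
        + (α - s) * (2 * v x * deriv v x) * Faux v f α s s x = _
    rw [Faux_gt (Nat.lt_succ_self s)]
    rw [ih x, Finset.prod_range_succ]
    simp [deriv_const]
    ring

/-- The expansion of iterated derivatives of `f(y) * ((v y)^2 - lam)^α`. -/
lemma expansion {v f : ℝ → ℝ} (hv : ContDiff ℝ (⊤ : ℕ∞) v) {U : Set ℝ}
    (hU : IsOpen U) (hf : ContDiffOn ℝ (⊤ : ℕ∞) f U) (α : ℝ) {lam : ℝ}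
    (hpos : ∀ y ∈ U, 0 < (v y) ^ 2 - lam) :
    ∀ (s : ℕ), ∀ x ∈ U, iteratedDeriv s (fun y => f y * ((v y) ^ 2 - lam) ^ α) x
      = ∑ j ∈ Finset.range (s + 1),
          Faux v f α s j x * ((v x) ^ 2 - lam) ^ (α - j) := by
  intro s
  induction s with
  | zero =>
    intro x hx
    simp [iteratedDeriv_zero, Faux]
  | succ s ih =>
    intro x hx
    rw [iteratedDeriv_succ]
    have hev : iteratedDeriv s (fun y => f y * ((v y) ^ 2 - lam) ^ α) =ᶠ[𝓝 x]
        fun y => ∑ j ∈ Finset.range (s + 1),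
          Faux v f α s j y * ((v y) ^ 2 - lam) ^ (α - j) := by
      filter_upwards [hU.mem_nhds hx] with y hy using ih y hy
    rw [hev.deriv_eq]
    have hvx : HasDerivAt v (deriv v x) x :=
      ((hv.differentiable (by simp)) x).hasDerivAt
    have hG : HasDerivAt (fun y => (v y) ^ 2 - lam) (2 * v x * deriv v x) x := by
      have := (hvx.pow 2).sub_const lam
      exact this.congr_deriv (by norm_num)
    have hterm : ∀ j ∈ Finset.range (s + 1),
        HasDerivAt (fun y => Faux v f α s j y * ((v y) ^ 2 - lam) ^ (α - j))
          (deriv (Faux v f α s j) x * ((v x) ^ 2 - lam) ^ (α - j)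
            + Faux v f α s j x *
              ((α - j) * ((v x) ^ 2 - lam) ^ (α - j - 1) * (2 * v x * deriv v x))) x := by
      intro j _
      have hFd : DifferentiableAt ℝ (Faux v f α s j) x :=
        ((Faux_contDiffOn hv hU hf α s j).contDiffAt (hU.mem_nhds hx)).differentiableAt
          (by simp)
      have hF : HasDerivAt (Faux v f α s j) (deriv (Faux v f α s j) x) x := hFd.hasDerivAt
      have hpow : HasDerivAt (fun y => ((v y) ^ 2 - lam) ^ (α - j))
          (((α - j) * ((v x) ^ 2 - lam) ^ (α - j - 1)) * (2 * v x * deriv v x)) x :=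
        (hG.rpow_const (p := α - j) (Or.inl (ne_of_gt (hpos x hx)))).congr_deriv (by ring)
      exact (hF.mul hpow).congr_deriv (by ring)
    have hsum := HasDerivAt.fun_sum hterm
    rw [hsum.deriv]
    have hFtop : deriv (Faux v f α s (s + 1)) x = 0 := by
      rw [Faux_gt (Nat.lt_succ_self s)]; simp
    rw [Finset.sum_range_succ'
      (fun j => Faux v f α (s+1) j x * ((v x) ^ 2 - lam) ^ (α - j)) (s + 1)]
    rw [Finset.sum_add_distrib]
    have e1 : ∑ j ∈ Finset.range (s + 1),
        deriv (Faux v f α s j) x * ((v x) ^ 2 - lam) ^ (α - j)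
        = (∑ j ∈ Finset.range (s + 1),
            deriv (Faux v f α s (j+1)) x * ((v x) ^ 2 - lam) ^ (α - (j+1 : ℕ)))
          + deriv (Faux v f α s 0) x * ((v x) ^ 2 - lam) ^ (α - (0 : ℕ)) := by
      rw [Finset.sum_range_succ
        (fun j => deriv (Faux v f α s (j+1)) x * ((v x) ^ 2 - lam) ^ (α - (j+1 : ℕ))) s]
      rw [hFtop, zero_mul, add_zero]
      exact Finset.sum_range_succ'
        (fun j => deriv (Faux v f α s j) x * ((v x) ^ 2 - lam) ^ (α - j)) s
    rw [e1]
    have e2 : ∀ j ∈ Finset.range (s + 1),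
        Faux v f α s j x * ((α - j) * ((v x) ^ 2 - lam) ^ (α - j - 1) * (2 * v x * deriv v x))
        = (α - j) * (2 * v x * deriv v x) * Faux v f α s j x
            * ((v x) ^ 2 - lam) ^ (α - (j+1 : ℕ)) := by
      intro j _
      have : α - (j : ℝ) - 1 = α - ((j + 1 : ℕ) : ℝ) := by push_cast; ring
      rw [this]; ring
    rw [Finset.sum_congr rfl e2]
    have e3 : ∀ j ∈ Finset.range (s + 1),
        Faux v f α (s + 1) (j + 1) x * ((v x) ^ 2 - lam) ^ (α - (j+1 : ℕ))
        = deriv (Faux v f α s (j+1)) x * ((v x) ^ 2 - lam) ^ (α - (j+1 : ℕ))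
          + (α - j) * (2 * v x * deriv v x) * Faux v f α s j x
              * ((v x) ^ 2 - lam) ^ (α - (j+1 : ℕ)) := by
      intro j _
      show (deriv (Faux v f α s (j+1)) x
          + (α - j) * (2 * v x * deriv v x) * Faux v f α s j x) * _ = _
      ring
    rw [Finset.sum_congr rfl e3, Finset.sum_add_distrib]
    show _ = _ + deriv (Faux v f α s 0) x * ((v x) ^ 2 - lam) ^ (α - (0:ℕ))
    ring

lemma contDiffOn_iteratedDeriv {f : ℝ → ℝ} {U : Set ℝ} (hU : IsOpen U)
    (hf : ContDiffOn ℝ (⊤ : ℕ∞) f U) (n : ℕ) :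
    ContDiffOn ℝ (⊤ : ℕ∞) (iteratedDeriv n f) U := by
  induction n with
  | zero => simpa [iteratedDeriv_zero] using hf
  | succ n ih =>
    have : iteratedDeriv (n + 1) f = deriv (iteratedDeriv n f) := by
      funext y; rw [iteratedDeriv_succ]
    rw [this]
    exact ih.deriv_of_isOpen hU infty_succ_le

lemma diffAt_iteratedDeriv {f : ℝ → ℝ} {U : Set ℝ} (hU : IsOpen U)
    (hf : ContDiffOn ℝ (⊤ : ℕ∞) f U) (n : ℕ) {x : ℝ} (hx : x ∈ U) :
    DifferentiableAt ℝ (iteratedDeriv n f) x :=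
  ((contDiffOn_iteratedDeriv hU hf n).contDiffAt (hU.mem_nhds hx)).differentiableAt (by simp)

lemma iteratedDeriv_lin {U : Set ℝ} (hU : IsOpen U) {f g : ℝ → ℝ}
    (hf : ContDiffOn ℝ (⊤ : ℕ∞) f U) (hg : ContDiffOn ℝ (⊤ : ℕ∞) g U) (c d : ℝ) :
    ∀ (n : ℕ), ∀ x ∈ U, iteratedDeriv n (fun y => c * f y + d * g y) x
      = c * iteratedDeriv n f x + d * iteratedDeriv n g x := by
  intro n
  induction n with
  | zero => intro x _; simp [iteratedDeriv_zero]
  | succ n ih =>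
    intro x hx
    rw [iteratedDeriv_succ, iteratedDeriv_succ, iteratedDeriv_succ]
    have hev : iteratedDeriv n (fun y => c * f y + d * g y) =ᶠ[𝓝 x]
        fun y => c * iteratedDeriv n f y + d * iteratedDeriv n g y := by
      filter_upwards [hU.mem_nhds hx] with y hy using ih y hy
    rw [hev.deriv_eq]
    have hF := (diffAt_iteratedDeriv hU hf n hx).hasDerivAt
    have hG := (diffAt_iteratedDeriv hU hg n hx).hasDerivAt
    exact ((hF.const_mul c).add (hG.const_mul d)).deriv

lemma my_iteratedDeriv_one (n : ℕ) :
    iteratedDeriv n (fun _ : ℝ => (1 : ℝ)) = fun _ => if n = 0 then (1:ℝ) else 0 := by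
  induction n with
  | zero => simp [iteratedDeriv_zero]
  | succ n ih =>
    funext x
    rw [iteratedDeriv_succ, ih]
    by_cases h : n = 0 <;> simp [h]

lemma tendsto_E {a : ℝ} (r : ℝ) (hr : 0 ≤ r) :
    Tendsto (fun lam => (a ^ 2 - lam) ^ r) (𝓝[<] (a ^ 2)) (𝓝 (if r = 0 then 1 else 0)) := by
  rcases eq_or_lt_of_le hr with h0 | hpos
  · simp only [← h0, Real.rpow_zero, if_pos rfl]
    exact tendsto_const_nhds
  · rw [if_neg (ne_of_gt hpos)]
    have hbase : Tendsto (fun lam : ℝ => a ^ 2 - lam) (𝓝[<] (a ^ 2)) (𝓝[>] 0) := by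
      rw [tendsto_nhdsWithin_iff]
      constructor
      · have : Tendsto (fun lam : ℝ => a ^ 2 - lam) (𝓝 (a ^ 2)) (𝓝 (a ^ 2 - a ^ 2)) :=
          (tendsto_const_nhds.sub tendsto_id)
        simpa using this.mono_left nhdsWithin_le_nhds
      · filter_upwards [self_mem_nhdsWithin] with lam hlam
        exact sub_pos.mpr (Set.mem_Iio.mp hlam)
    have hc : Tendsto (fun t : ℝ => t ^ r) (𝓝[>] (0:ℝ)) (𝓝 0) := by
      have := (Real.continuousAt_rpow_const 0 r (Or.inr hr)).tendsto
      rw [Real.zero_rpow (ne_of_gt hpos)] at this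
      exact this.mono_left nhdsWithin_le_nhds
    exact hc.comp hbase

lemma tendsto_eps_sum {a : ℝ} (m : ℕ) (u : ℕ → ℝ) (ρ : ℕ → ℝ)
    (hρ : ∀ j ∈ Finset.range m, 0 ≤ ρ j) :
    Tendsto (fun lam => ∑ j ∈ Finset.range m, u j * (a ^ 2 - lam) ^ (ρ j))
      (𝓝[<] (a ^ 2)) (𝓝 (∑ j ∈ Finset.range m, if ρ j = 0 then u j else 0)) := by
  apply tendsto_finset_sum
  intro j hj
  have := (tendsto_E (a := a) (ρ j) (hρ j hj)).const_mul (u j)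
  by_cases h : ρ j = 0 <;> simpa [h] using this


lemma Kcoef_formula (v : ℝ → ℝ) (hv : ContDiff ℝ (⊤ : ℕ∞) v) (x₀ : ℝ) (h1 : 0 < v x₀)
    (s : ℕ) (lam : ℝ) (hlam : lam < (v x₀) ^ 2) :
    Kcoef v s x₀ lam =
      (∑ j ∈ Finset.range (s+1),
          Faux v (fun y => 1/(2 * v y)) (-1) s j x₀ * ((v x₀) ^ 2 - lam) ^ ((-1:ℝ) - j))
      + (s : ℝ) * ( (1/(2*lam)) * ∑ j ∈ Finset.range (s+1),
            Faux v (fun _ => (1:ℝ)) (-(1/2:ℝ)) s j x₀ * ((v x₀) ^ 2 - lam) ^ (-(1/2:ℝ) - j)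
          + (-(1/(2*lam))) * iteratedDeriv s (fun y => 1 / v y) x₀ )
      + ∑ k ∈ Finset.Icc 1 s, (Nat.choose s k : ℝ) *
          ( (1/(2*lam)) * ∑ j ∈ Finset.range k,
              Faux v v (-(1/2:ℝ)) (k-1) j x₀ * ((v x₀) ^ 2 - lam) ^ (-(1/2:ℝ) - j)
            + (-(1/(2*lam))) * (if k = 1 then 1 else 0) ) *
          ( ∑ j ∈ Finset.range (s+2-k),
              Faux v (fun _ => (1:ℝ)) (-(1/2:ℝ)) (s+1-k) j x₀
                * ((v x₀) ^ 2 - lam) ^ (-(1/2:ℝ) - j) ) := by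
  have hUeq : {y : ℝ | 0 < v y ∧ lam < (v y) ^ 2}
      = {y : ℝ | 0 < v y} ∩ {y : ℝ | lam < (v y) ^ 2} := rfl
  set U : Set ℝ := {y : ℝ | 0 < v y ∧ lam < (v y) ^ 2} with hUdef
  have hU : IsOpen U :=
    (isOpen_lt continuous_const hv.continuous).inter
      (isOpen_lt continuous_const (hv.continuous.pow 2))
  have hx₀ : x₀ ∈ U := ⟨h1, hlam⟩
  have hpos : ∀ y ∈ U, 0 < (v y) ^ 2 - lam := fun y hy => sub_pos.2 hy.2
  have hvne : ∀ y ∈ U, v y ≠ 0 := fun y hy => ne_of_gt hy.1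
  have hf1 : ContDiffOn ℝ (⊤ : ℕ∞) (fun y => 1/(2 * v y)) U :=
    contDiffOn_const.div (contDiffOn_const.mul hv.contDiffOn)
      (fun y hy => by have := hvne y hy; positivity)
  have hg : ContDiffOn ℝ (⊤ : ℕ∞) (fun y => ((v y) ^ 2 - lam) ^ (-(1/2:ℝ))) U :=
    ((hv.contDiffOn.pow 2).sub contDiffOn_const).rpow_const_of_ne
      (fun y hy => ne_of_gt (hpos y hy))
  have hinv : ContDiffOn ℝ (⊤ : ℕ∞) (fun y => 1 / v y) U :=
    contDiffOn_const.div hv.contDiffOn hvne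
  have hgexp : ∀ (m : ℕ), iteratedDeriv m (fun y => ((v y) ^ 2 - lam) ^ (-(1/2:ℝ))) x₀
      = ∑ j ∈ Finset.range (m+1),
          Faux v (fun _ => (1:ℝ)) (-(1/2:ℝ)) m j x₀ * ((v x₀) ^ 2 - lam) ^ (-(1/2:ℝ) - j) := by
    intro m
    have h1m : (fun y => ((v y) ^ 2 - lam) ^ (-(1/2:ℝ)))
        = fun y => (1:ℝ) * ((v y) ^ 2 - lam) ^ (-(1/2:ℝ)) := funext fun y => (one_mul _).symm
    rw [h1m, expansion hv hU contDiffOn_const (-(1/2:ℝ)) hpos m x₀ hx₀]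
  have T1 : iteratedDeriv s (fun y => 1 / (2 * v y * ((v y) ^ 2 - lam))) x₀
      = ∑ j ∈ Finset.range (s+1),
          Faux v (fun y => 1/(2 * v y)) (-1) s j x₀ * ((v x₀) ^ 2 - lam) ^ ((-1:ℝ) - j) := by
    have hev : (fun y => 1 / (2 * v y * ((v y) ^ 2 - lam))) =ᶠ[𝓝 x₀]
        fun y => (1/(2 * v y)) * ((v y) ^ 2 - lam) ^ ((-1):ℝ) := by
      filter_upwards [hU.mem_nhds hx₀] with y hy
      rw [Real.rpow_neg_one]
      have h2v : (2 : ℝ) * v y ≠ 0 := by have := hvne y hy; positivity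
      field_simp
    rw [hev.iteratedDeriv_eq s]
    exact expansion hv hU hf1 (-1) hpos s x₀ hx₀
  have T2 : iteratedDeriv s
        (fun y => (1 / (2 * lam)) * (((v y) ^ 2 - lam) ^ (-(1 / 2 : ℝ)) - 1 / v y)) x₀
      = (1/(2*lam)) * ∑ j ∈ Finset.range (s+1),
            Faux v (fun _ => (1:ℝ)) (-(1/2:ℝ)) s j x₀ * ((v x₀) ^ 2 - lam) ^ (-(1/2:ℝ) - j)
          + (-(1/(2*lam))) * iteratedDeriv s (fun y => 1 / v y) x₀ := by
    have hsplit : (fun y => (1 / (2 * lam)) * (((v y) ^ 2 - lam) ^ (-(1 / 2 : ℝ)) - 1 / v y))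
        = fun y => (1/(2*lam)) * ((v y) ^ 2 - lam) ^ (-(1/2:ℝ))
            + (-(1/(2*lam))) * (1 / v y) := funext fun y => by ring
    rw [hsplit, iteratedDeriv_lin hU hg hinv _ _ s x₀ hx₀, hgexp s]
  have T3 : ∀ k ∈ Finset.Icc 1 s,
      (Nat.choose s k : ℝ)
        * iteratedDeriv (k - 1)
            (fun y => (1 / (2 * lam)) * (v y * ((v y) ^ 2 - lam) ^ (-(1 / 2 : ℝ)) - 1)) x₀
        * iteratedDeriv (s + 1 - k)
            (fun y => ((v y) ^ 2 - lam) ^ (-(1 / 2 : ℝ))) x₀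
      = (Nat.choose s k : ℝ) *
          ( (1/(2*lam)) * ∑ j ∈ Finset.range k,
              Faux v v (-(1/2:ℝ)) (k-1) j x₀ * ((v x₀) ^ 2 - lam) ^ (-(1/2:ℝ) - j)
            + (-(1/(2*lam))) * (if k = 1 then 1 else 0) ) *
          ( ∑ j ∈ Finset.range (s+2-k),
              Faux v (fun _ => (1:ℝ)) (-(1/2:ℝ)) (s+1-k) j x₀
                * ((v x₀) ^ 2 - lam) ^ (-(1/2:ℝ) - j) ) := by
    intro k hk
    obtain ⟨hk1, hks⟩ := Finset.mem_Icc.mp hk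
    have hA : iteratedDeriv (k - 1)
          (fun y => (1 / (2 * lam)) * (v y * ((v y) ^ 2 - lam) ^ (-(1 / 2 : ℝ)) - 1)) x₀
        = (1/(2*lam)) * ∑ j ∈ Finset.range k,
              Faux v v (-(1/2:ℝ)) (k-1) j x₀ * ((v x₀) ^ 2 - lam) ^ (-(1/2:ℝ) - j)
            + (-(1/(2*lam))) * (if k = 1 then 1 else 0) := by
      have hsplit : (fun y => (1 / (2 * lam)) * (v y * ((v y) ^ 2 - lam) ^ (-(1 / 2 : ℝ)) - 1))
          = fun y => (1/(2*lam)) * (v y * ((v y) ^ 2 - lam) ^ (-(1/2:ℝ)))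
              + (-(1/(2*lam))) * (1:ℝ) := funext fun y => by ring
      rw [hsplit, iteratedDeriv_lin hU (hv.contDiffOn.mul hg) contDiffOn_const _ _ (k-1) x₀ hx₀]
      rw [expansion hv hU hv.contDiffOn (-(1/2:ℝ)) hpos (k-1) x₀ hx₀]
      rw [my_iteratedDeriv_one]
      have hkk : k - 1 + 1 = k := by omega
      rw [hkk]
      have hif : (k - 1 = 0) = (k = 1) := by
        apply propext; omega
      simp only [hif]
    have hB := hgexp (s + 1 - k)
    have hkk2 : s + 1 - k + 1 = s + 2 - k := by omega
    rw [hA, hB, hkk2]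
  show _ + _ + _ = _
  rw [T1, T2, Finset.sum_congr rfl T3]


lemma eps_pow_mul_sum {eps : ℝ} (heps : 0 < eps) (n : ℕ) (m : ℕ) (u : ℕ → ℝ) (β : ℝ)
    (ρ : ℕ → ℝ) (hρ : ∀ j, ρ j = (n : ℝ) + (β - j)) :
    eps ^ n * ∑ j ∈ Finset.range m, u j * eps ^ (β - (j:ℝ))
      = ∑ j ∈ Finset.range m, u j * eps ^ (ρ j) := by
  rw [Finset.mul_sum]
  refine Finset.sum_congr rfl fun j _ => ?_
  rw [hρ j, Real.rpow_add heps, Real.rpow_natCast]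
  ring

lemma eps_pow_mul_sum_mul_sum {eps : ℝ} (heps : 0 < eps) (n : ℕ) (m m' : ℕ)
    (u u' : ℕ → ℝ) (β β' : ℝ) (ρ : ℕ → ℕ → ℝ)
    (hρ : ∀ j j', ρ j j' = (n : ℝ) + (β - j) + (β' - j')) :
    eps ^ n * ((∑ j ∈ Finset.range m, u j * eps ^ (β - (j:ℝ)))
        * (∑ j' ∈ Finset.range m', u' j' * eps ^ (β' - (j':ℝ))))
      = ∑ j ∈ Finset.range m, ∑ j' ∈ Finset.range m',
          (u j * u' j') * eps ^ (ρ j j') := by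
  rw [Finset.sum_mul_sum, Finset.mul_sum]
  refine Finset.sum_congr rfl fun j _ => ?_
  rw [Finset.mul_sum]
  refine Finset.sum_congr rfl fun j' _ => ?_
  rw [hρ j j', Real.rpow_add heps, Real.rpow_add heps, Real.rpow_natCast]
  ring

/-- The limiting value of `((v x₀)^2 - lam)^(s+1) * Kcoef v s x₀ lam` as `lam → (v x₀)^2⁻`. -/
noncomputable def climit (v : ℝ → ℝ) (x₀ : ℝ) (s : ℕ) : ℝ :=
  Faux v (fun y => 1/(2 * v y)) (-1) s s x₀
  + ∑ k ∈ Finset.Icc 1 s, (Nat.choose s k : ℝ) * ((1/(2 * (v x₀) ^ 2)) *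
      (Faux v v (-(1/2:ℝ)) (k-1) (k-1) x₀
        * Faux v (fun _ => (1:ℝ)) (-(1/2:ℝ)) (s+1-k) (s+1-k) x₀))

lemma key (v : ℝ → ℝ) (hv : ContDiff ℝ (⊤ : ℕ∞) v) (x₀ : ℝ) (h1 : 0 < v x₀) (s : ℕ) :
    Tendsto (fun lam => ((v x₀) ^ 2 - lam) ^ (s+1) * Kcoef v s x₀ lam)
      (𝓝[<] ((v x₀) ^ 2)) (𝓝 (climit v x₀ s)) := by
  have ha2 : (0:ℝ) < (v x₀) ^ 2 := by positivity
  unfold climit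
  set a := v x₀ with hadef
  set p : ℕ → ℝ := fun j => Faux v (fun y => 1/(2 * v y)) (-1) s j x₀ with hp
  set q : ℕ → ℕ → ℝ := fun m j => Faux v (fun _ => (1:ℝ)) (-(1/2:ℝ)) m j x₀ with hq
  set r : ℕ → ℕ → ℝ := fun m j => Faux v v (-(1/2:ℝ)) m j x₀ with hr
  set D : ℝ := iteratedDeriv s (fun y => 1 / v y) x₀ with hD
  set Φ : ℝ → ℝ := fun lam =>
    (∑ j ∈ Finset.range (s+1), p j * (a ^ 2 - lam) ^ ((s:ℝ) - j))
    + (s : ℝ) * ((1/(2*lam)) *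
          (∑ j ∈ Finset.range (s+1), q s j * (a ^ 2 - lam) ^ ((s:ℝ) + 1/2 - j))
        + (-(1/(2*lam))) * D * (a ^ 2 - lam) ^ ((s:ℝ) + 1))
    + ∑ k ∈ Finset.Icc 1 s, ((Nat.choose s k : ℝ) * ((1/(2*lam)) *
          (∑ j ∈ Finset.range k, ∑ j' ∈ Finset.range (s+2-k),
            (r (k-1) j * q (s+1-k) j') * (a ^ 2 - lam) ^ ((s:ℝ) - j - j')))
        + (Nat.choose s k : ℝ) * (-(1/(2*lam))) * (if k = 1 then 1 else 0) *
          (∑ j' ∈ Finset.range (s+2-k), q (s+1-k) j' * (a ^ 2 - lam) ^ ((s:ℝ) + 1/2 - j')))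
    with hΦ
  have hev : (fun lam => (a ^ 2 - lam) ^ (s+1) * Kcoef v s x₀ lam) =ᶠ[𝓝[<] (a ^ 2)] Φ := by
    filter_upwards [Ioo_mem_nhdsLT_of_mem (Set.mem_Ioc.mpr ⟨ha2, le_refl _⟩)] with lam hlam
    obtain ⟨hlam0, hlama⟩ := hlam
    have heps : 0 < a ^ 2 - lam := sub_pos.2 hlama
    rw [Kcoef_formula v hv x₀ h1 s lam hlama]
    rw [mul_add, mul_add]
    congr 1
    · congr 1
      · exact eps_pow_mul_sum heps (s+1) (s+1) p (-1) (fun j => (s:ℝ) - j)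
          (fun j => by push_cast; ring)
      · have e2 := eps_pow_mul_sum heps (s+1) (s+1) (q s) (-(1/2:ℝ))
          (fun j => (s:ℝ) + 1/2 - j) (fun j => by push_cast; ring)
        have eD : (a ^ 2 - lam) ^ ((s:ℝ) + 1) = (a ^ 2 - lam) ^ (s+1) := by
          rw [← Real.rpow_natCast (a ^ 2 - lam) (s+1)]
          congr 1
          push_cast; ring
        rw [eD]
        linear_combination ((s:ℝ) * (1/(2*lam))) * e2
    · rw [Finset.mul_sum]
      refine Finset.sum_congr rfl fun k hk => ?_
      obtain ⟨hk1, hks⟩ := Finset.mem_Icc.mp hk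
      have eA := eps_pow_mul_sum_mul_sum heps (s+1) k (s+2-k) (r (k-1)) (q (s+1-k))
        (-(1/2:ℝ)) (-(1/2:ℝ)) (fun j j' => (s:ℝ) - j - j')
        (fun j j' => by push_cast; ring)
      have eB := eps_pow_mul_sum heps (s+1) (s+2-k) (q (s+1-k)) (-(1/2:ℝ))
        (fun j' => (s:ℝ) + 1/2 - j') (fun j' => by push_cast; ring)
      set C := (Nat.choose s k : ℝ)
      set ifk : ℝ := if k = 1 then 1 else 0
      linear_combination (C * (1/(2*lam))) * eA + (C * (-(1/(2*lam))) * ifk) * eB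
  refine Tendsto.congr' hev.symm ?_
  have hconst : Tendsto (fun lam : ℝ => 1/(2*lam)) (𝓝[<] (a ^ 2)) (𝓝 (1/(2 * a ^ 2))) := by
    have hca : ContinuousAt (fun lam : ℝ => 1/(2*lam)) (a ^ 2) := by
      apply ContinuousAt.div continuousAt_const (continuousAt_const.mul continuousAt_id)
      show (2:ℝ) * a ^ 2 ≠ 0
      positivity
    exact hca.tendsto.mono_left nhdsWithin_le_nhds
  have h1lim : Tendsto (fun lam => ∑ j ∈ Finset.range (s+1),
      p j * (a ^ 2 - lam) ^ ((s:ℝ) - j)) (𝓝[<] (a ^ 2)) (𝓝 (p s)) := by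
    have ht := tendsto_eps_sum (a := a) (s+1) p (fun j => (s:ℝ) - j)
      (fun j hj => by
        have hj1 : (j:ℝ) ≤ s := by
          exact_mod_cast Nat.lt_succ_iff.mp (Finset.mem_range.mp hj)
        show (0:ℝ) ≤ (s:ℝ) - (j:ℝ)
        linarith)
    have hval : (∑ j ∈ Finset.range (s+1),
        if (s:ℝ) - (j:ℝ) = 0 then p j else 0) = p s := by
      have hcong : ∀ j ∈ Finset.range (s+1),
          (if (s:ℝ) - (j:ℝ) = 0 then p j else 0) = if j = s then p j else 0 := by
        intro j _
        by_cases hjs : j = s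
        · simp [hjs]
        · rw [if_neg hjs, if_neg]
          intro hc
          have : (j:ℝ) = s := by linarith [sub_eq_zero.mp hc]
          exact hjs (by exact_mod_cast this)
      rw [Finset.sum_congr rfl hcong, Finset.sum_ite_eq' (Finset.range (s+1)) s p,
        if_pos (Finset.self_mem_range_succ s)]
    rwa [hval] at ht
  have h2lim : Tendsto (fun lam => (s : ℝ) * ((1/(2*lam)) *
          (∑ j ∈ Finset.range (s+1), q s j * (a ^ 2 - lam) ^ ((s:ℝ) + 1/2 - j))
        + (-(1/(2*lam))) * D * (a ^ 2 - lam) ^ ((s:ℝ) + 1)))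
      (𝓝[<] (a ^ 2)) (𝓝 0) := by
    have hS2 : Tendsto (fun lam => ∑ j ∈ Finset.range (s+1),
        q s j * (a ^ 2 - lam) ^ ((s:ℝ) + 1/2 - j)) (𝓝[<] (a ^ 2)) (𝓝 0) := by
      have ht := tendsto_eps_sum (a := a) (s+1) (q s) (fun j => (s:ℝ) + 1/2 - j)
        (fun j hj => by
          have hj1 : (j:ℝ) ≤ s := by
            exact_mod_cast Nat.lt_succ_iff.mp (Finset.mem_range.mp hj)
          show (0:ℝ) ≤ (s:ℝ) + 1/2 - (j:ℝ)
          linarith)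
      have hval : (∑ j ∈ Finset.range (s+1),
          if (s:ℝ) + 1/2 - (j:ℝ) = 0 then q s j else 0) = 0 := by
        apply Finset.sum_eq_zero
        intro j hj
        have hj1 : (j:ℝ) ≤ s := by
          exact_mod_cast Nat.lt_succ_iff.mp (Finset.mem_range.mp hj)
        rw [if_neg]
        intro hc
        linarith
      rwa [hval] at ht
    have hD2 : Tendsto (fun lam => (a ^ 2 - lam) ^ ((s:ℝ) + 1)) (𝓝[<] (a ^ 2)) (𝓝 0) := by
      have ht := tendsto_E (a := a) ((s:ℝ) + 1) (by positivity)
      rwa [if_neg (by positivity : (0:ℝ) < (s:ℝ)+1).ne'] at ht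
    have ht := ((hconst.mul hS2).add
      ((hconst.neg.mul (tendsto_const_nhds (x := D))).mul hD2)).const_mul (s:ℝ)
    have hval : (s:ℝ) * (1/(2 * a ^ 2) * 0 + -(1/(2 * a ^ 2)) * D * 0) = 0 := by ring
    rwa [hval] at ht
  have h3lim : Tendsto (fun lam =>
      ∑ k ∈ Finset.Icc 1 s, ((Nat.choose s k : ℝ) * ((1/(2*lam)) *
          (∑ j ∈ Finset.range k, ∑ j' ∈ Finset.range (s+2-k),
            (r (k-1) j * q (s+1-k) j') * (a ^ 2 - lam) ^ ((s:ℝ) - j - j')))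
        + (Nat.choose s k : ℝ) * (-(1/(2*lam))) * (if k = 1 then 1 else 0) *
          (∑ j' ∈ Finset.range (s+2-k), q (s+1-k) j' * (a ^ 2 - lam) ^ ((s:ℝ) + 1/2 - j'))))
      (𝓝[<] (a ^ 2))
      (𝓝 (∑ k ∈ Finset.Icc 1 s, (Nat.choose s k : ℝ) * ((1/(2 * a ^ 2)) *
        (r (k-1) (k-1) * q (s+1-k) (s+1-k))))) := by
    apply tendsto_finset_sum
    intro k hk
    obtain ⟨hk1, hks⟩ := Finset.mem_Icc.mp hk
    have hDS : Tendsto (fun lam => ∑ j ∈ Finset.range k, ∑ j' ∈ Finset.range (s+2-k),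
          (r (k-1) j * q (s+1-k) j') * (a ^ 2 - lam) ^ ((s:ℝ) - j - j'))
        (𝓝[<] (a ^ 2)) (𝓝 (r (k-1) (k-1) * q (s+1-k) (s+1-k))) := by
      have hinner : ∀ j ∈ Finset.range k,
          Tendsto (fun lam => ∑ j' ∈ Finset.range (s+2-k),
            (r (k-1) j * q (s+1-k) j') * (a ^ 2 - lam) ^ ((s:ℝ) - j - j'))
          (𝓝[<] (a ^ 2))
          (𝓝 (if j = k - 1 then r (k-1) (k-1) * q (s+1-k) (s+1-k) else 0)) := by
        intro j hj
        have hjk : j < k := Finset.mem_range.mp hj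
        have ht := tendsto_eps_sum (a := a) (s+2-k) (fun j' => r (k-1) j * q (s+1-k) j')
          (fun j' => (s:ℝ) - j - j')
          (fun j' hj' => by
            have hj'2 : j' < s + 2 - k := Finset.mem_range.mp hj'
            have hnat : j + j' ≤ s := by omega
            have : ((j:ℝ) + (j':ℝ)) ≤ s := by exact_mod_cast hnat
            show (0:ℝ) ≤ (s:ℝ) - (j:ℝ) - (j':ℝ)
            linarith)
        have hval : (∑ j' ∈ Finset.range (s+2-k),
            if (s:ℝ) - (j:ℝ) - (j':ℝ) = 0 then r (k-1) j * q (s+1-k) j' else 0)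
            = if j = k - 1 then r (k-1) (k-1) * q (s+1-k) (s+1-k) else 0 := by
          have hcong : ∀ j' ∈ Finset.range (s+2-k),
              (if (s:ℝ) - (j:ℝ) - (j':ℝ) = 0 then r (k-1) j * q (s+1-k) j' else 0)
              = if j' = s - j then r (k-1) j * q (s+1-k) j' else 0 := by
            intro j' _
            by_cases hje : j' = s - j
            · have hcond : (s:ℝ) - (j:ℝ) - (j':ℝ) = 0 := by
                have hjs : j ≤ s := by omega
                have : ((j':ℕ):ℝ) = ((s - j : ℕ):ℝ) := by rw [hje]
                rw [Nat.cast_sub hjs] at this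
                linarith
              rw [if_pos hcond, if_pos hje]
            · rw [if_neg hje, if_neg]
              intro hc
              apply hje
              have hjs : j ≤ s := by omega
              have : (j':ℝ) = (s:ℝ) - j := by linarith
              rw [← Nat.cast_sub hjs] at this
              exact_mod_cast this
          rw [Finset.sum_congr rfl hcong,
            Finset.sum_ite_eq' (Finset.range (s+2-k)) (s - j) (fun j' => r (k-1) j * q (s+1-k) j')]
          by_cases hjk1 : j = k - 1
          · rw [if_pos (Finset.mem_range.mpr (by omega)), if_pos hjk1]
            have h1 : s - j = s + 1 - k := by omega
            rw [h1, hjk1]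
          · rw [if_neg (by
              intro hmem
              have := Finset.mem_range.mp hmem
              omega), if_neg hjk1]
        rwa [hval] at ht
      have ht := tendsto_finset_sum (Finset.range k) hinner
      have hval : (∑ j ∈ Finset.range k,
          if j = k - 1 then r (k-1) (k-1) * q (s+1-k) (s+1-k) else 0)
          = r (k-1) (k-1) * q (s+1-k) (s+1-k) := by
        rw [Finset.sum_ite_eq' (Finset.range k) (k-1)
          (fun _ => r (k-1) (k-1) * q (s+1-k) (s+1-k)),
          if_pos (Finset.mem_range.mpr (by omega))]
      rwa [hval] at ht
    have hSB : Tendsto (fun lam => ∑ j' ∈ Finset.range (s+2-k),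
          q (s+1-k) j' * (a ^ 2 - lam) ^ ((s:ℝ) + 1/2 - j'))
        (𝓝[<] (a ^ 2)) (𝓝 0) := by
      have ht := tendsto_eps_sum (a := a) (s+2-k) (q (s+1-k)) (fun j' => (s:ℝ) + 1/2 - j')
        (fun j' hj' => by
          have hj'2 : j' < s + 2 - k := Finset.mem_range.mp hj'
          have hnat : j' ≤ s := by omega
          have : ((j':ℕ):ℝ) ≤ s := by exact_mod_cast hnat
          show (0:ℝ) ≤ (s:ℝ) + 1/2 - (j':ℝ)
          linarith)
      have hval : (∑ j' ∈ Finset.range (s+2-k),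
          if (s:ℝ) + 1/2 - (j':ℝ) = 0 then q (s+1-k) j' else 0) = 0 := by
        apply Finset.sum_eq_zero
        intro j' hj'
        have hj'2 : j' < s + 2 - k := Finset.mem_range.mp hj'
        have hnat : j' ≤ s := by omega
        have hjr : ((j':ℕ):ℝ) ≤ s := by exact_mod_cast hnat
        rw [if_neg]
        intro hc
        linarith
      rwa [hval] at ht
    have hpart1 := (tendsto_const_nhds (x := (Nat.choose s k : ℝ))).mul (hconst.mul hDS)
    have hpart2 := (((tendsto_const_nhds (x := (Nat.choose s k : ℝ))).mul hconst.neg).mul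
      (tendsto_const_nhds (x := (if k = 1 then (1:ℝ) else 0)))).mul hSB
    have ht := hpart1.add hpart2
    have hval : (Nat.choose s k : ℝ) * (1/(2 * a ^ 2) * (r (k-1) (k-1) * q (s+1-k) (s+1-k)))
        + (Nat.choose s k : ℝ) * -(1/(2 * a ^ 2)) * (if k = 1 then (1:ℝ) else 0) * 0
        = (Nat.choose s k : ℝ) * ((1/(2 * a ^ 2)) * (r (k-1) (k-1) * q (s+1-k) (s+1-k))) := by
      ring
    rwa [hval] at ht
  have ht := (h1lim.add h2lim).add h3lim
  have hval : p s + 0 + (∑ k ∈ Finset.Icc 1 s, (Nat.choose s k : ℝ) * ((1/(2 * a ^ 2)) *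
        (r (k-1) (k-1) * q (s+1-k) (s+1-k))))
      = p s + ∑ k ∈ Finset.Icc 1 s, (Nat.choose s k : ℝ) * ((1/(2 * a ^ 2)) *
        (r (k-1) (k-1) * q (s+1-k) (s+1-k))) := by ring
  rwa [hval] at ht


lemma prod_neg_one (s : ℕ) : ∏ i ∈ Finset.range s, ((-1:ℝ) - i) = (-1)^s * (Nat.factorial s : ℝ) := by
  induction s with
  | zero => simp
  | succ s ih =>
    rw [Finset.prod_range_succ, ih, Nat.factorial_succ]
    push_cast
    ring

noncomputable def Qp (m : ℕ) : ℝ := ∏ i ∈ Finset.range m, ((1/2:ℝ) + i)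

lemma Qp_pos (m : ℕ) : 0 < Qp m := by
  apply Finset.prod_pos
  intro i _
  positivity

lemma prod_half (m : ℕ) : ∏ i ∈ Finset.range m, (-(1/2:ℝ) - i) = (-1)^m * Qp m := by
  induction m with
  | zero => simp [Qp]
  | succ m ih =>
    have hQ : Qp (m+1) = Qp m * ((1/2:ℝ) + m) := Finset.prod_range_succ _ m
    rw [Finset.prod_range_succ, ih, hQ]
    ring

lemma climit_ne (v : ℝ → ℝ) (x₀ : ℝ) (h1 : 0 < v x₀) (h2 : deriv v x₀ ≠ 0) (s : ℕ) :
    climit v x₀ s ≠ 0 := by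
  have ha : v x₀ ≠ 0 := ne_of_gt h1
  have hwne : (2 * v x₀ * deriv v x₀) ≠ 0 :=
    mul_ne_zero (mul_ne_zero two_ne_zero ha) h2
  have hrw : climit v x₀ s
      = (-1)^s * (2 * v x₀ * deriv v x₀)^s * (1/(2 * v x₀)) * ((Nat.factorial s : ℝ)
        + ∑ k ∈ Finset.Icc 1 s, (Nat.choose s k : ℝ) * (Qp (k-1) * Qp (s+1-k))) := by
    unfold climit
    rw [Faux_diag, prod_neg_one]
    have hsum : ∀ k ∈ Finset.Icc 1 s,
        (Nat.choose s k : ℝ) * ((1/(2 * (v x₀) ^ 2)) *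
          (Faux v v (-(1/2:ℝ)) (k-1) (k-1) x₀
            * Faux v (fun _ => (1:ℝ)) (-(1/2:ℝ)) (s+1-k) (s+1-k) x₀))
        = (-1)^s * (2 * v x₀ * deriv v x₀)^s * (1/(2 * v x₀))
            * ((Nat.choose s k : ℝ) * (Qp (k-1) * Qp (s+1-k))) := by
      intro k hk
      obtain ⟨hk1, hks⟩ := Finset.mem_Icc.mp hk
      rw [Faux_diag, Faux_diag, prod_half, prod_half]
      have hpow1 : ((-1:ℝ))^(k-1) * ((-1:ℝ))^(s+1-k) = ((-1:ℝ))^s := by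
        rw [← pow_add, show (k-1) + (s+1-k) = s by omega]
      have hpow2 : (2 * v x₀ * deriv v x₀)^(k-1) * (2 * v x₀ * deriv v x₀)^(s+1-k)
          = (2 * v x₀ * deriv v x₀)^s := by
        rw [← pow_add, show (k-1) + (s+1-k) = s by omega]
      refine Eq.trans (b := (Nat.choose s k : ℝ) * ((1/(2 * (v x₀) ^ 2)) *
        (v x₀ * ((((-1:ℝ))^(k-1) * ((-1:ℝ))^(s+1-k))
          * ((2 * v x₀ * deriv v x₀)^(k-1) * (2 * v x₀ * deriv v x₀)^(s+1-k))
          * (Qp (k-1) * Qp (s+1-k)))))) (by ring) ?_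
      rw [hpow1, hpow2]
      field_simp
    rw [Finset.sum_congr rfl hsum, ← Finset.mul_sum]
    have h1x : (1:ℝ)/(2 * v x₀) * ((-1)^s * (Nat.factorial s : ℝ))
          * (2 * v x₀ * deriv v x₀)^s
        = (-1)^s * (2 * v x₀ * deriv v x₀)^s * (1/(2 * v x₀)) * (Nat.factorial s : ℝ) := by
      ring
    rw [h1x, mul_add]
  rw [hrw]
  apply mul_ne_zero
  apply mul_ne_zero
  apply mul_ne_zero
  · exact pow_ne_zero s (by norm_num)
  · exact pow_ne_zero s hwne
  · simp [ha]
  · have hpos : (0:ℝ) < (Nat.factorial s : ℝ)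
        + ∑ k ∈ Finset.Icc 1 s, (Nat.choose s k : ℝ) * (Qp (k-1) * Qp (s+1-k)) := by
      have hf1 : (0:ℝ) < (Nat.factorial s : ℝ) := by
        exact_mod_cast Nat.factorial_pos s
      have hf2 : (0:ℝ) ≤ ∑ k ∈ Finset.Icc 1 s,
          (Nat.choose s k : ℝ) * (Qp (k-1) * Qp (s+1-k)) := by
        apply Finset.sum_nonneg
        intro k _
        have := Qp_pos (k-1)
        have := Qp_pos (s+1-k)
        positivity
      linarith
    exact ne_of_gt hpos

end Aux

/-- If a linear combination  of the loop-equation coefficient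
functions vanishes for all  in a left neighborhood of , where  is smooth with
 and , then all the coefficients  vanish. -/
theorem uniqueness_lemma (v : ℝ → ℝ) (hv : ContDiff ℝ (⊤ : ℕ∞) v) (x₀ : ℝ)
    (h1 : 0 < v x₀) (h2 : deriv v x₀ ≠ 0) (N : ℕ) (B : ℕ → ℝ)
    (h : ∃ δ > 0, ∀ lam ∈ Set.Ioo ((v x₀) ^ 2 - δ) ((v x₀) ^ 2),
        ∑ s ∈ Finset.range (N + 1), B s * Kcoef v s x₀ lam = 0) :
    ∀ s ≤ N, B s = 0 := by
  obtain ⟨δ, hδ, hzero⟩ := h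
  have hv' : ContDiff ℝ ((⊤:ℕ∞) : WithTop ℕ∞) v := hv.of_le (by simp)
  have ha2 : (0:ℝ) < (v x₀) ^ 2 := by positivity
  -- vanishing limits for lower-order coefficients
  have hKlim0 : ∀ m s : ℕ, s < m →
      Tendsto (fun lam => ((v x₀) ^ 2 - lam) ^ (m+1) * Kcoef v s x₀ lam)
        (𝓝[<] ((v x₀) ^ 2)) (𝓝 0) := by
    intro m s hsm
    have hpow : Tendsto (fun lam => ((v x₀) ^ 2 - lam) ^ (m - s))
        (𝓝[<] ((v x₀) ^ 2)) (𝓝 0) := by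
      have hc : Tendsto (fun lam : ℝ => ((v x₀) ^ 2 - lam) ^ (m - s))
          (𝓝 ((v x₀) ^ 2)) (𝓝 (((v x₀) ^ 2 - (v x₀) ^ 2) ^ (m - s))) :=
        ((continuous_const.sub continuous_id).pow (m - s)).tendsto _
      rw [sub_self, zero_pow (by omega : m - s ≠ 0)] at hc
      exact hc.mono_left nhdsWithin_le_nhds
    have ht := hpow.mul (key v hv' x₀ h1 s)
    rw [zero_mul] at ht
    apply ht.congr
    intro lam
    rw [← mul_assoc, ← pow_add, show m - s + (s + 1) = m + 1 by omega]
  have main : ∀ d m : ℕ, m ≤ N → N - m < d → B m = 0 := by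
    intro d
    induction d with
    | zero => intro m _ hd; omega
    | succ d ih =>
      intro m hm hd
      by_cases hcase : N - m < d
      · exact ih m hm hcase
      have hBgt : ∀ t, m < t → t ≤ N → B t = 0 := fun t htm htN => ih t htN (by omega)
      -- the function is eventually zero
      have hev0 : (fun lam => ((v x₀) ^ 2 - lam) ^ (m+1)
            * ∑ s ∈ Finset.range (N + 1), B s * Kcoef v s x₀ lam)
          =ᶠ[𝓝[<] ((v x₀) ^ 2)] (fun _ => (0:ℝ)) := by
        filter_upwards [Ioo_mem_nhdsLT_of_mem
          (Set.mem_Ioc.mpr ⟨sub_lt_self _ hδ, le_refl _⟩)] with lam hlam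
        rw [hzero lam hlam, mul_zero]
      have hzlim : Tendsto (fun lam => ((v x₀) ^ 2 - lam) ^ (m+1)
            * ∑ s ∈ Finset.range (N + 1), B s * Kcoef v s x₀ lam)
          (𝓝[<] ((v x₀) ^ 2)) (𝓝 0) :=
        Tendsto.congr' hev0.symm tendsto_const_nhds
      -- reduce the sum
      have hred : ∀ lam, ∑ s ∈ Finset.range (N + 1), B s * Kcoef v s x₀ lam
          = ∑ s ∈ Finset.range (m + 1), B s * Kcoef v s x₀ lam := by
        intro lam
        symm
        apply Finset.sum_subset (Finset.range_subset_range.2 (by omega))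
        intro t ht hnt
        have h1t : t ≤ N := Nat.lt_succ_iff.mp (Finset.mem_range.mp ht)
        have h2t : m < t := by
          by_contra hc
          exact hnt (Finset.mem_range.mpr (by omega))
        rw [hBgt t h2t h1t, zero_mul]
      -- the limit of the reduced expression
      have hlim : Tendsto (fun lam => ((v x₀) ^ 2 - lam) ^ (m+1)
            * ∑ s ∈ Finset.range (N + 1), B s * Kcoef v s x₀ lam)
          (𝓝[<] ((v x₀) ^ 2)) (𝓝 (B m * climit v x₀ m)) := by
        have hterm : ∀ s ∈ Finset.range (m + 1),
            Tendsto (fun lam => B s * (((v x₀) ^ 2 - lam) ^ (m+1) * Kcoef v s x₀ lam))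
              (𝓝[<] ((v x₀) ^ 2))
              (𝓝 (if s = m then B m * climit v x₀ m else 0)) := by
          intro s hs
          have hsm : s ≤ m := Nat.lt_succ_iff.mp (Finset.mem_range.mp hs)
          by_cases hsem : s = m
          · rw [if_pos hsem, hsem]
            exact (key v hv' x₀ h1 m).const_mul (B m)
          · rw [if_neg hsem]
            have ht := (hKlim0 m s (by omega)).const_mul (B s)
            rwa [mul_zero] at ht
        have ht := tendsto_finset_sum (Finset.range (m + 1)) hterm
        have hval : (∑ s ∈ Finset.range (m + 1),
            if s = m then B m * climit v x₀ m else 0) = B m * climit v x₀ m := by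
          rw [Finset.sum_ite_eq' (Finset.range (m + 1)) m
            (fun _ => B m * climit v x₀ m), if_pos (Finset.self_mem_range_succ m)]
        rw [hval] at ht
        apply ht.congr
        intro lam
        rw [hred lam, Finset.mul_sum]
        refine Finset.sum_congr rfl fun s _ => by ring
      have heq : B m * climit v x₀ m = 0 := tendsto_nhds_unique hlim hzlim
      rcases mul_eq_zero.mp heq with h | h
      · exact h
      · exact absurd h (climit_ne v x₀ h1 h2 m)
  intro s hs
  exact main (N - s + 1) s hs (by omega)
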